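/- Let X be a finite metric space with an even number n = 2k+2 ≥ 4 of points that embeds isometrically into the real line ℝ. Then t_b(X) ≥ t_d(X). -/

import Mathlib

/-!
Let `a` and `b` be the points sent to the minimum and the maximum of `f`, and `c` any third
point. On the line every point lies between `a` and `b`, so the farthest point from `c` is `a`
or `b`. Moreover `c` is no farther from `a` than `b` is, so `dist a c` is at most the second
largest distance from `a`, and symmetrically for `b`. Hence
`t_d(c) = max (dist a c) (dist b c) ≤ max (t_b(a)) (t_b(b))`.
-/

/-- The largest distance from `x` to any point of `X`. -/
noncomputable def ptTd (X : Type*) [MetricSpace X] (x : X) : ℝ :=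
  sSup (Set.range fun y => dist x y)

/-- The second largest distance (counted with multiplicity over points) from `x`
to points of `X`. -/
noncomputable def ptTb (X : Type*) [MetricSpace X] (x : X) : ℝ :=
  sSup {r : ℝ | ∃ y z : X, y ≠ z ∧ r = min (dist x y) (dist x z)}

/-- `t_b(X) = max_{x ∈ X} t_b(x)`. -/
noncomputable def tbX (X : Type*) [MetricSpace X] : ℝ :=
  sSup (Set.range (ptTb X))

/-- `t_d(X) = min_{x ∈ X} t_d(x)`. -/
noncomputable def tdX (X : Type*) [MetricSpace X] : ℝ :=
  sInf (Set.range (ptTd X))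

section

variable {X : Type*} [MetricSpace X]

theorem tdX_le_ptTd (x : X) : tdX X ≤ ptTd X x :=
  csInf_le ⟨0, by rintro _ ⟨y, rfl⟩; exact Real.iSup_nonneg fun _ => dist_nonneg⟩
    (Set.mem_range_self x)

theorem ptTd_le_of_forall_dist_le {x : X} {r : ℝ} (h : ∀ y, dist x y ≤ r) : ptTd X x ≤ r :=
  have : Nonempty X := ⟨x⟩
  ciSup_le h

theorem ptTd_le_max_dist_of_isometry {f : X → ℝ} (hf : Isometry f) {a b : X}
    (hab : ∀ y, f y ∈ Set.Icc (f a) (f b)) (c : X) :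
    ptTd X c ≤ max (dist a c) (dist b c) := by
  refine ptTd_le_of_forall_dist_le fun y => ?_
  have hbtw : Wbtw ℝ (f a) (f y) (f b) := by
    rw [← mem_segment_iff_wbtw, segment_eq_Icc ((hab a).1.trans (hab a).2)]
    exact hab y
  simpa only [← hf.dist_eq, dist_comm (f c)] using hbtw.dist_le_max_dist (f c)

variable [Finite X]

theorem ptTb_le_tbX (x : X) : ptTb X x ≤ tbX X :=
  le_csSup (Set.finite_range _).bddAbove (Set.mem_range_self x)

theorem dist_le_ptTb_of_dist_le {x y z : X} (hyz : y ≠ z) (h : dist x y ≤ dist x z) :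
    dist x y ≤ ptTb X x := by
  have hbdd : BddAbove {r : ℝ | ∃ y z : X, y ≠ z ∧ r = min (dist x y) (dist x z)} :=
    ((Set.finite_range fun p : X × X => min (dist x p.1) (dist x p.2)).subset
      (by rintro _ ⟨y, z, -, rfl⟩; exact ⟨(y, z), rfl⟩)).bddAbove
  exact le_csSup hbdd ⟨y, z, hyz, (min_eq_left h).symm⟩

end

/-- A finite metric space with `2k+2 ≥ 4` points that embeds isometrically in the real
line satisfies `t_b(X) ≥ t_d(X)`. -/
theorem tbX_ge_tdX_of_isometry_to_real (X : Type*) [MetricSpace X] [Fintype X]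
    (k : ℕ) (hk : 1 ≤ k) (hcard : Fintype.card X = 2 * k + 2)
    (f : X → ℝ) (hf : Isometry f) :
    tdX X ≤ tbX X := by
  classical
  have : Nonempty X := Fintype.card_pos_iff.mp (by omega)
  obtain ⟨a, ha⟩ := Finite.exists_min f
  obtain ⟨b, hb⟩ := Finite.exists_max f
  have hab : ∀ y, f y ∈ Set.Icc (f a) (f b) := fun y => ⟨ha y, hb y⟩
  obtain ⟨c, -, hc⟩ := Finset.exists_mem_notMem_of_card_lt_card
    (Finset.card_le_two.trans_lt (by rw [Finset.card_univ]; omega) :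
      Finset.card {a, b} < Finset.card Finset.univ)
  obtain ⟨hca, hcb⟩ : c ≠ a ∧ c ≠ b := by
    simpa only [Finset.mem_insert, Finset.mem_singleton, not_or] using hc
  have hac : dist a c ≤ dist a b := by
    rw [← hf.dist_eq, ← hf.dist_eq]
    exact Real.dist_left_le_of_mem_uIcc (Set.Icc_subset_uIcc (hab c))
  have hbc : dist b c ≤ dist b a := by
    rw [← hf.dist_eq, ← hf.dist_eq]
    exact Real.dist_left_le_of_mem_uIcc (Set.uIcc_comm (f a) (f b) ▸ Set.Icc_subset_uIcc (hab c))
  calc tdX X ≤ ptTd X c := tdX_le_ptTd c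
    _ ≤ max (dist a c) (dist b c) := ptTd_le_max_dist_of_isometry hf hab c
    _ ≤ max (ptTb X a) (ptTb X b) :=
      max_le_max (dist_le_ptTb_of_dist_le hcb hac) (dist_le_ptTb_of_dist_le hca hbc)
    _ ≤ tbX X := max_le (ptTb_le_tbX a) (ptTb_le_tbX b)
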